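/- Fix ε > 0 and δ ∈ (0,1), assume N is nonempty, and let m = ⌈(|N|² / (2ε²)) · ln(2^{|P|+1} / δ)⌉. Then under m independent draws of realizations (the product distribution on m-tuples (H_1, …, H_m) of subsets of E, where each H_i has probability Pr(H_i)), the probability of the event that there exists some S ⊆ P with |F(S) − F̂_m(S)| > ε is at most δ, where F̂_m(S) = (1/m) Σ_{i=1}^m f_{H_i}(S). -/

import Mathlib

open Finset

/-- A single transmission step along a live edge of `H`, avoiding the removed vertex set `S`. -/
def MintStep {α : Type*} (H : Finset (α × α)) (S : Finset α) (x y : α) : Prop :=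
  (x, y) ∈ H ∧ x ∉ S ∧ y ∉ S

/-- `u` is reachable from `v` in `H[V \ S]`: there is a directed path (possibly of length 0)
from `v` to `u` using only edges of `H`, all of whose vertices avoid `S`. -/
def MintReach {α : Type*} (H : Finset (α × α)) (S : Finset α) (v u : α) : Prop :=
  v ∉ S ∧ Relation.ReflTransGen (MintStep H S) v u

/-- The realized MINT objective `f_H(S)`: the number of negative nodes (nodes outside `P`)
reachable from some untreated positive node (a node of `P \ S`) in `H[V \ S]`. -/
noncomputable def mintf {α : Type*} [DecidableEq α] (P : Finset α) (H : Finset (α × α))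
    (S : Finset α) : ℕ :=
  Set.ncard {u : α | u ∉ P ∧ ∃ v ∈ P \ S, MintReach H S v u}

/-- The probability of the live-edge realization `H ⊆ E`. -/
def mintPr {α : Type*} [DecidableEq α] (E : Finset (α × α)) (w : α × α → ℝ)
    (H : Finset (α × α)) : ℝ :=
  (∏ e ∈ H, w e) * ∏ e ∈ E \ H, (1 - w e)

/-- The expected MINT objective `F(S) = Σ_{H ⊆ E} Pr(H) · f_H(S)`. -/
noncomputable def mintF {α : Type*} [DecidableEq α] (E : Finset (α × α)) (w : α × α → ℝ)
    (P : Finset α) (S : Finset α) : ℝ :=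
  ∑ H ∈ E.powerset, mintPr E w H * (mintf P H S : ℝ)

/-!
For a fixed `S`, `f_H(S)` takes values in `[0, |N|]` and `F(S)` is its mean under `Pr`, so
Hoeffding's inequality for the `m` independent draws bounds the probability of a deviation
above `ε` by `2 exp (-2 m ε² / |N|²)`; a union bound over the `2^|P|` sets `S ⊆ P` and the
choice of `m` bring the total down to `δ`. Probabilities of events of `m` draws are the sums of
`∏ i, p (ωs i)` over `Fintype.piFinset`; Hoeffding's lemma is taken from Mathlib by viewing `p` as
the measure `∑ ω ∈ s, p ω • dirac ω`, and the tail bound follows from the exponential Markov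
inequality and the factorisation `∑ ωs, ∏ i, g (ωs i) = (∑ ω, g ω) ^ m`.
-/

open MeasureTheory ProbabilityTheory Real

theorem Finset.sum_filter_or_le {ι M : Type*} [AddCommMonoid M] [PartialOrder M]
    [IsOrderedAddMonoid M] (s : Finset ι) (P Q : ι → Prop) [DecidablePred P] [DecidablePred Q]
    {f : ι → M} (hf : ∀ i ∈ s, 0 ≤ f i) :
    ∑ i ∈ s with P i ∨ Q i, f i ≤ ∑ i ∈ s with P i, f i + ∑ i ∈ s with Q i, f i := by
  classical
  rw [filter_or, ← sum_union_inter]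
  exact le_add_of_nonneg_right (sum_nonneg fun i hi => hf i (mem_filter.mp (mem_inter.mp hi).1).1)

theorem Finset.sum_filter_exists_le {ι κ M : Type*} [AddCommMonoid M] [PartialOrder M]
    [IsOrderedAddMonoid M] (s : Finset ι) (T : Finset κ) (Q : κ → ι → Prop)
    [∀ k, DecidablePred (Q k)] [DecidablePred fun i => ∃ k ∈ T, Q k i]
    {f : ι → M} (hf : ∀ i ∈ s, 0 ≤ f i) :
    ∑ i ∈ s with ∃ k ∈ T, Q k i, f i ≤ ∑ k ∈ T, ∑ i ∈ s with Q k i, f i := by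
  classical
  calc _ = ∑ i ∈ (T.sigma fun k => {i ∈ s | Q k i}).image Sigma.snd, f i := by
        congr 1
        ext i
        simp only [mem_filter, mem_image, mem_sigma, Sigma.exists, exists_eq_right]
        tauto
    _ ≤ ∑ x ∈ T.sigma fun k => {i ∈ s | Q k i}, f x.2 :=
        sum_image_le_of_nonneg fun i hi => hf i (by
          simp only [mem_image, mem_sigma, mem_filter, Sigma.exists, exists_eq_right] at hi
          tauto)
    _ = _ := sum_sigma _ _ _

section FiniteHoeffding

variable {Ω : Type*} {s : Finset Ω} {p X : Ω → ℝ}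

theorem Finset.hoeffding_lemma (hp : ∀ ω ∈ s, 0 ≤ p ω) (hp1 : ∑ ω ∈ s, p ω = 1)
    {a b : ℝ} (hX : ∀ ω ∈ s, X ω ∈ Set.Icc a b) (t : ℝ) :
    ∑ ω ∈ s, p ω * exp (t * (X ω - ∑ ω' ∈ s, p ω' * X ω')) ≤ exp ((b - a) ^ 2 * t ^ 2 / 8) := by
  let _ : MeasurableSpace Ω := ⊤
  let μ : Measure Ω := ∑ ω ∈ s, ENNReal.ofReal (p ω) • Measure.dirac ω
  have integral_μ (f : Ω → ℝ) : ∫ x, f x ∂μ = ∑ ω ∈ s, p ω * f ω := by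
    rw [integral_finsetSum_measure fun ω _ => (integrable_dirac (by simp)).smul_measure (by simp)]
    refine sum_congr rfl fun ω hω => ?_
    rw [integral_smul_measure, integral_dirac, ENNReal.toReal_ofReal (hp ω hω), smul_eq_mul]
  have : IsProbabilityMeasure μ := ⟨by simp [μ, ← ENNReal.ofReal_sum_of_nonneg hp, hp1]⟩
  have hXμ : ∀ᵐ ω ∂μ, X ω ∈ Set.Icc a b := by
    rw [ae_iff]
    simpa [μ] using fun ω hω => Or.inr (hX ω hω)
  have hoeffding := (hasSubgaussianMGF_of_mem_Icc measurable_from_top.aemeasurable hXμ).mgf_le t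
  rw [mgf, integral_μ, integral_μ] at hoeffding
  convert hoeffding using 2
  push_cast [coe_nnnorm, Real.norm_eq_abs, div_pow, sq_abs]
  ring

theorem Finset.hoeffding_upper_tail (hp : ∀ ω ∈ s, 0 ≤ p ω)
    (hp1 : ∑ ω ∈ s, p ω = 1) {a b : ℝ} (hab : a < b) (hX : ∀ ω ∈ s, X ω ∈ Set.Icc a b)
    (m : ℕ) {ε : ℝ} (hε : 0 ≤ ε) :
    ∑ ωs ∈ Fintype.piFinset (fun _ : Fin m => s) with
        m * (∑ ω ∈ s, p ω * X ω + ε) ≤ ∑ i, X (ωs i), ∏ i, p (ωs i)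
      ≤ exp (-(2 * m * ε ^ 2 / (b - a) ^ 2)) := by
  set μ := ∑ ω ∈ s, p ω * X ω
  set t := 4 * ε / (b - a) ^ 2
  have ht : 0 ≤ t := by positivity
  set g : Ω → ℝ := fun ω => p ω * exp (t * (X ω - μ))
  have hg : ∀ ω ∈ s, 0 ≤ g ω := fun ω hω => mul_nonneg (hp ω hω) (exp_pos _).le
  -- Markov's inequality for `exp (t * (∑ i, X (ωs i) - m * μ))`
  have markov :
      ∀ ωs ∈ {ωs ∈ Fintype.piFinset (fun _ : Fin m => s) | m * (μ + ε) ≤ ∑ i, X (ωs i)},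
        ∏ i, p (ωs i) ≤ exp (-(t * (m * ε))) * ∏ i, g (ωs i) := by
    intro ωs hωs
    rw [mem_filter, Fintype.mem_piFinset] at hωs
    have hprod : ∏ i, g (ωs i) = (∏ i, p (ωs i)) * exp (t * (∑ i, X (ωs i) - m * μ)) := by
      simp only [g, prod_mul_distrib, ← exp_sum, ← mul_sum, sum_sub_distrib, sum_const,
        card_univ, Fintype.card_fin, nsmul_eq_mul]
    have hexp : 1 ≤ exp (-(t * (m * ε))) * exp (t * (∑ i, X (ωs i) - m * μ)) := by
      rw [← exp_add, one_le_exp_iff]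
      nlinarith [hωs.2]
    rw [hprod, mul_left_comm]
    exact le_mul_of_one_le_right (prod_nonneg fun i _ => hp _ (hωs.1 i)) hexp
  calc _ ≤ ∑ ωs ∈ Fintype.piFinset (fun _ : Fin m => s) with
          m * (μ + ε) ≤ ∑ i, X (ωs i), exp (-(t * (m * ε))) * ∏ i, g (ωs i) := sum_le_sum markov
    _ ≤ ∑ ωs ∈ Fintype.piFinset (fun _ : Fin m => s), exp (-(t * (m * ε))) * ∏ i, g (ωs i) :=
        sum_le_sum_of_subset_of_nonneg (filter_subset _ _) fun ωs hωs _ =>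
          mul_nonneg (exp_pos _).le
            (prod_nonneg fun i _ => hg _ (Fintype.mem_piFinset.mp hωs i))
    _ = exp (-(t * (m * ε))) * (∑ ω ∈ s, g ω) ^ m := by
        rw [← mul_sum, ← prod_univ_sum, prod_const, card_univ, Fintype.card_fin]
    _ ≤ exp (-(t * (m * ε))) * exp ((b - a) ^ 2 * t ^ 2 / 8) ^ m := by
        gcongr
        · exact sum_nonneg hg
        · exact hoeffding_lemma hp hp1 hX t
    _ = exp (-(2 * m * ε ^ 2 / (b - a) ^ 2)) := by
        rw [← exp_nat_mul, ← exp_add]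
        congr 1
        simp only [t]
        field_simp [(sub_pos.mpr hab).ne']
        ring

theorem Finset.hoeffding_two_sided (hp : ∀ ω ∈ s, 0 ≤ p ω)
    (hp1 : ∑ ω ∈ s, p ω = 1) {a b : ℝ} (hab : a < b) (hX : ∀ ω ∈ s, X ω ∈ Set.Icc a b)
    (m : ℕ) {ε : ℝ} (hε : 0 ≤ ε) :
    ∑ ωs ∈ Fintype.piFinset (fun _ : Fin m => s) with
        ε < |∑ ω ∈ s, p ω * X ω - 1 / (m : ℝ) * ∑ i, X (ωs i)|, ∏ i, p (ωs i)
      ≤ 2 * exp (-(2 * m * ε ^ 2 / (b - a) ^ 2)) := by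
  set μ := ∑ ω ∈ s, p ω * X ω
  have upper := hoeffding_upper_tail hp hp1 hab hX m hε
  have lower := hoeffding_upper_tail (X := fun ω => -X ω) hp hp1
    (neg_lt_neg hab) (fun ω hω => ⟨neg_le_neg (hX ω hω).2, neg_le_neg (hX ω hω).1⟩) m hε
  simp only [neg_sub_neg, mul_neg, sum_neg_distrib] at lower
  have hmean (ωs : Fin m → Ω) : m * (1 / (m : ℝ) * ∑ i, X (ωs i)) = ∑ i, X (ωs i) := by
    rcases m.eq_zero_or_pos with rfl | hm
    · simp
    · field_simp
  have hm : (0 : ℝ) ≤ m := m.cast_nonneg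
  calc _ ≤ ∑ ωs ∈ Fintype.piFinset (fun _ : Fin m => s) with
          m * (μ + ε) ≤ ∑ i, X (ωs i) ∨ m * (-μ + ε) ≤ -∑ i, X (ωs i), ∏ i, p (ωs i) := by
        refine sum_le_sum_of_subset_of_nonneg (monotone_filter_right _ fun ωs _ hdev => ?_)
          fun ωs hωs _ => prod_nonneg fun i _ =>
            hp _ (Fintype.mem_piFinset.mp (mem_filter.mp hωs).1 i)
        have := hmean ωs
        rcases lt_abs.mp hdev with hdev | hdev
        · right; nlinarith
        · left; nlinarith
    _ ≤ _ := sum_filter_or_le _ _ _ fun ωs hωs => prod_nonneg fun i _ =>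
          hp _ (Fintype.mem_piFinset.mp hωs i)
    _ ≤ _ := by linarith

end FiniteHoeffding

theorem mintPr_nonneg {α : Type*} [DecidableEq α] {E H : Finset (α × α)} {w : α × α → ℝ}
    (hw : ∀ e ∈ E, 0 ≤ w e ∧ w e ≤ 1) (hH : H ⊆ E) : 0 ≤ mintPr E w H :=
  mul_nonneg (prod_nonneg fun e he => (hw e (hH he)).1)
    (prod_nonneg fun e he => sub_nonneg.mpr (hw e (mem_sdiff.mp he).1).2)

theorem sum_mintPr_powerset {α : Type*} [DecidableEq α] (E : Finset (α × α)) (w : α × α → ℝ) :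
    ∑ H ∈ E.powerset, mintPr E w H = 1 := by
  simp only [mintPr]
  rw [← prod_add, prod_congr rfl fun e _ => add_sub_cancel (w e) 1, prod_const_one]

theorem mintf_le_card_compl {α : Type*} [Fintype α] [DecidableEq α] (P : Finset α)
    (H : Finset (α × α)) (S : Finset α) : mintf P H S ≤ Pᶜ.card := by
  rw [← Set.ncard_coe_finset]
  exact Set.ncard_le_ncard (fun u hu => by simpa using hu.1) (Set.toFinite _)

theorem mul_exp_neg_le_of_mul_log_le {K δ B ε : ℝ} (hK : 0 < K) (hδ : 0 < δ) (hB : 0 < B)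
    (hε : 0 < ε) {m : ℝ} (hm : B ^ 2 / (2 * ε ^ 2) * log (K / δ) ≤ m) :
    K * exp (-(2 * m * ε ^ 2 / B ^ 2)) ≤ δ := by
  have hlog : log (K / δ) ≤ 2 * m * ε ^ 2 / B ^ 2 := by
    rw [le_div_iff₀ (by positivity)]
    rw [div_mul_eq_mul_div, div_le_iff₀ (by positivity)] at hm
    linarith
  calc K * exp (-(2 * m * ε ^ 2 / B ^ 2)) ≤ K * exp (-log (K / δ)) := by gcongr
    _ = δ := by rw [exp_neg, exp_log (by positivity)]; field_simp

open Classical in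
theorem stmt10_general {α : Type*} [Fintype α] [DecidableEq α] (E : Finset (α × α))
    (w : α × α → ℝ) (hw : ∀ e ∈ E, 0 ≤ w e ∧ w e ≤ 1)
    (P : Finset α) (hN : (Pᶜ : Finset α).Nonempty)
    (ε δ : ℝ) (hε : 0 < ε) (hδ0 : 0 < δ)
    (m : ℕ)
    (hm : m = ⌈((Pᶜ.card : ℝ) ^ 2 / (2 * ε ^ 2)) * Real.log ((2 : ℝ) ^ (P.card + 1) / δ)⌉₊) :
    ∑ Hs ∈ (Fintype.piFinset fun _ : Fin m => E.powerset).filter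
        (fun Hs : Fin m → Finset (α × α) => ∃ S ⊆ P,
          ε < |mintF E w P S - (1 / (m : ℝ)) * ∑ i : Fin m, (mintf P (Hs i) S : ℝ)|),
      ∏ i : Fin m, mintPr E w (Hs i) ≤ δ := by
  set B : ℝ := (Pᶜ.card : ℝ)
  have hB : 0 < B := Nat.cast_pos.mpr hN.card_pos
  have hprod_nonneg : ∀ Hs ∈ Fintype.piFinset fun _ : Fin m => E.powerset,
      0 ≤ ∏ i, mintPr E w (Hs i) := fun Hs hHs => prod_nonneg fun i _ =>
    mintPr_nonneg hw (mem_powerset.mp (Fintype.mem_piFinset.mp hHs i))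
  have deviation (S : Finset α) := hoeffding_two_sided
    (fun H hH => mintPr_nonneg hw (mem_powerset.mp hH)) (sum_mintPr_powerset E w) hB
    (X := fun H => (mintf P H S : ℝ))
    (fun H _ => ⟨Nat.cast_nonneg _, Nat.cast_le.mpr (mintf_le_card_compl P H S)⟩) m hε.le
  rw [sub_zero] at deviation
  calc _ = ∑ Hs ∈ (Fintype.piFinset fun _ : Fin m => E.powerset).filter
        (fun Hs : Fin m → Finset (α × α) => ∃ S ∈ P.powerset,
          ε < |mintF E w P S - (1 / (m : ℝ)) * ∑ i : Fin m, (mintf P (Hs i) S : ℝ)|),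
        ∏ i : Fin m, mintPr E w (Hs i) := by simp only [mem_powerset]
    _ ≤ ∑ S ∈ P.powerset, 2 * exp (-(2 * m * ε ^ 2 / B ^ 2)) :=
        (sum_filter_exists_le _ _ _ hprod_nonneg).trans (sum_le_sum fun S _ => deviation S)
    _ = 2 ^ (P.card + 1) * exp (-(2 * m * ε ^ 2 / B ^ 2)) := by
        rw [sum_const, card_powerset, nsmul_eq_mul, pow_succ]
        push_cast
        ring
    _ ≤ δ := mul_exp_neg_le_of_mul_log_le (by positivity) hδ0 hB hε (hm ▸ Nat.le_ceil _)

open Classical in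
/-- Uniform version (union bound over all `S ⊆ P`): with
`m = ⌈(|N|² / (2ε²)) · ln(2^{|P|+1} / δ)⌉` samples, under `m` independent draws of
realizations, the probability that there exists some `S ⊆ P` with `|F(S) - F̂_m(S)| > ε`
is at most `δ`. -/
theorem stmt10 {α : Type*} [Fintype α] [DecidableEq α] (E : Finset (α × α))
    (w : α × α → ℝ) (hw : ∀ e ∈ E, 0 ≤ w e ∧ w e ≤ 1)
    (P : Finset α) (hinc : ∀ e ∈ E, e.2 ∉ P) (hN : (Pᶜ : Finset α).Nonempty)
    (ε δ : ℝ) (hε : 0 < ε) (hδ0 : 0 < δ) (hδ1 : δ < 1)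
    (m : ℕ)
    (hm : m = ⌈((Pᶜ.card : ℝ) ^ 2 / (2 * ε ^ 2)) * Real.log ((2 : ℝ) ^ (P.card + 1) / δ)⌉₊) :
    ∑ Hs ∈ (Fintype.piFinset fun _ : Fin m => E.powerset).filter
        (fun Hs : Fin m → Finset (α × α) => ∃ S ⊆ P,
          ε < |mintF E w P S - (1 / (m : ℝ)) * ∑ i : Fin m, (mintf P (Hs i) S : ℝ)|),
      ∏ i : Fin m, mintPr E w (Hs i) ≤ δ :=
  stmt10_general E w hw P hN ε δ hε hδ0 m hm
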